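/- arXiv:2307.05850 — 8 statements merged into one kernel-verified Lean document; each statement's English description precedes it below -/
import Mathlib

section
/- Let k ≥ 2, s ≥ 1, and let p_X, p_Y : ℕ → ℝ with p_Y(n) = p_X(n+s) for all n ≥ 1 and p_X(n) ≥ 1 for all n. If lim_{n→∞} ((k−1)/k^{n+1}) log p_X(n) = h, then lim_{n→∞} ((k−1)/k^{n+1}) log p_Y(n) = k^s · h. In particular if h > 0 the two limits differ, so the entropy h_PS is not a conjugacy invariant. -/
open Filter

-- At `k = 0` with `s ≥ 1` both sides vanish, by the convention `c / 0 = 0`.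
theorem pow_mul_div_pow_add_succ {K : Type*} [Field K] (k c : K) (n s : ℕ) :
    k ^ s * (c / k ^ (n + s + 1)) = c / k ^ (n + 1) := by
  rcases eq_or_ne k 0 with rfl | hk
  · cases s <;> simp
  · rw [show n + s + 1 = s + (n + 1) by omega, pow_add]
    field_simp

theorem stmt_8_general {k s : ℕ} (pX pY : ℕ → ℝ)
    (hconj : ∀ n, 1 ≤ n → pY n = pX (n + s)) (h : ℝ)
    (hX : Filter.Tendsto
      (fun n => ((k : ℝ) - 1) / (k : ℝ) ^ (n + 1) * Real.log (pX n))
      Filter.atTop (nhds h)) :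
    Filter.Tendsto
      (fun n => ((k : ℝ) - 1) / (k : ℝ) ^ (n + 1) * Real.log (pY n))
      Filter.atTop (nhds ((k : ℝ) ^ s * h)) := by
  refine ((hX.comp (tendsto_add_atTop_nat s)).const_mul ((k : ℝ) ^ s)).congr' ?_
  filter_upwards [eventually_ge_atTop 1] with n hn
  rw [Function.comp_apply, hconj n hn, ← mul_assoc, ← mul_div_assoc,
    ← pow_mul_div_pow_add_succ (k : ℝ) _ n s, mul_div_assoc]

theorem stmt_8 {k s : ℕ} (hk : 2 ≤ k) (hs : 1 ≤ s) (pX pY : ℕ → ℝ)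
    (hconj : ∀ n, 1 ≤ n → pY n = pX (n + s)) (hpX : ∀ n, 1 ≤ pX n) (h : ℝ)
    (hX : Filter.Tendsto
      (fun n => ((k : ℝ) - 1) / (k : ℝ) ^ (n + 1) * Real.log (pX n))
      Filter.atTop (nhds h)) :
    Filter.Tendsto
      (fun n => ((k : ℝ) - 1) / (k : ℝ) ^ (n + 1) * Real.log (pY n))
      Filter.atTop (nhds ((k : ℝ) ^ s * h)) :=
  stmt_8_general pX pY hconj h hX
end

section
/- For the binary tree-shift X₂ defined by matrices A = [[1,1],[1,1]] and B = [[1,0],[0,1]], the complexity function satisfies p(n) = 2^(2^n − 1) · 2 = 2^(2^n) for all n ≥ 1; equivalently ‖f^n(𝟙)‖₁ = 2^{2^{n−1}} · 2^{2^{n−2}} ⋯ 2 · 2. Consequently h_PS(X₂) = lim_n (log p(n))/(2^{n+1} − 1) = (1/2) log 2. -/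
/-!
For the all-ones matrix `A` and `B = 1`, the map `f` sends the constant vector `c` to the constant
vector `2c²`, so `f^[n] 𝟙` is constant with value `g^[n] 1`, where `g c = 2c²`. Multiplication by `2`
conjugates `g` to squaring, hence `2 · g^[n] 1 = 2^(2^n)`, which is `p n`. The entropy quotient is
then `2^n log 2 / (2^(n+1) - 1) → (log 2) / 2`.
-/

open Filter Topology

section Squaring

variable {M : Type*} [CommMonoid M]

theorem semiconj_mul_mul_sq (a : M) :
    Function.Semiconj (a * ·) (fun x => a * x ^ 2) (· ^ 2) := fun x => by
  simp only [mul_pow, sq a, mul_assoc]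

theorem mul_iterate_mul_sq (a x : M) (n : ℕ) :
    a * (fun x => a * x ^ 2)^[n] x = (a * x) ^ 2 ^ n := by
  simpa only [pow_iterate] using (semiconj_mul_mul_sq a).iterate_right n x

end Squaring

theorem tendsto_two_pow_div_two_pow_succ_sub_one :
    Tendsto (fun n : ℕ => (2 : ℝ) ^ n / (2 ^ (n + 1) - 1)) atTop (𝓝 (1 / 2)) := by
  have hden : Tendsto (fun n : ℕ => 2 - (1 / 2 : ℝ) ^ n) atTop (𝓝 2) := by
    simpa using tendsto_const_nhds.sub
      (tendsto_pow_atTop_nhds_zero_of_lt_one (by norm_num : (0 : ℝ) ≤ 1 / 2) (by norm_num))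
  rw [one_div]
  refine (hden.inv₀ two_ne_zero).congr fun n => ?_
  rw [one_div_pow, pow_succ]
  field_simp

theorem stmt_12 :
    let A : Matrix (Fin 2) (Fin 2) ℝ := !![1, 1; 1, 1]
    let B : Matrix (Fin 2) (Fin 2) ℝ := !![1, 0; 0, 1]
    let f : (Fin 2 → ℝ) → (Fin 2 → ℝ) := fun x i => A.mulVec x i * B.mulVec x i
    let p : ℕ → ℝ := fun n => (f^[n] (fun _ => 1)) 0 + (f^[n] (fun _ => 1)) 1
    (∀ n : ℕ, 1 ≤ n → p n = 2 ^ (2 ^ n)) ∧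
    Filter.Tendsto (fun n : ℕ => Real.log (p n) / ((2 : ℝ) ^ (n + 1) - 1))
      Filter.atTop (nhds ((1 / 2) * Real.log 2)) := by
  intro A B f p
  have f_const : Function.Semiconj (Function.const (Fin 2)) (fun c : ℝ => 2 * c ^ 2) f :=
    fun c => funext fun i => by
      fin_cases i <;> simp [f, A, B, Matrix.mulVec, dotProduct] <;> ring
  have hp : ∀ n, p n = 2 ^ 2 ^ n := fun n => by
    have orbit : f^[n] (fun _ => 1) = fun _ => (fun c : ℝ => 2 * c ^ 2)^[n] 1 :=
      (f_const.iterate_right n 1).symm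
    simp only [p, orbit, ← two_mul, mul_iterate_mul_sq, mul_one]
  refine ⟨fun n _ => hp n, ?_⟩
  rw [mul_comm]
  refine (tendsto_two_pow_div_two_pow_succ_sub_one.const_mul (Real.log 2)).congr fun n => ?_
  rw [hp, Real.log_pow, Nat.cast_pow, Nat.cast_ofNat]
  ring
end

section
/- For the binary tree-shift X₄ = (A,D) with A = [[1,1],[1,1]] and D = [[1,1],[1,0]], setting f(x) = (Ax)*(Dx), one has for all n ≥ 3: ‖f^n(𝟙)‖₁ = Fib(3)^{2^{n−1}} · Fib(4)^{2^{n−2}} ⋯ Fib(n)^{4} · Fib(n+1)^2 · Fib(n+2) · Fib(n+3), where Fib is the Fibonacci sequence with Fib(1)=Fib(2)=1. -/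
/-!
Writing `s = x₀ + x₁`, the map is `f x = (s², s x₀)`, so it sends `c • (a, b)` to
`c² (a + b) • (a + b, a)`. Starting from `𝟙 = (F₂, F₁)`, every iterate is therefore a multiple
of a pair of consecutive Fibonacci numbers, `fⁿ(𝟙) = cₙ • (Fₙ₊₂, Fₙ₊₁)`, with
`cₙ₊₁ = cₙ² Fₙ₊₃`; unfolding this recursion gives the product of Fibonacci powers.
-/

open Finset Matrix Nat

def fibTreeMap (x : Fin 2 → ℕ) : Fin 2 → ℕ :=
  fun i => (!![1, 1; 1, 1] *ᵥ x) i * (!![1, 1; 1, 0] *ᵥ x) i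

lemma fibTreeMap_smul (c a b : ℕ) :
    fibTreeMap (c • ![a, b]) = (c ^ 2 * (a + b)) • ![a + b, a] := by
  ext i
  fin_cases i <;> simp [fibTreeMap, mulVec, dotProduct, Fin.sum_univ_two] <;> ring

def fibPowerProd (n : ℕ) : ℕ :=
  ∏ l ∈ Icc 2 n, fib (l + 1) ^ 2 ^ (n - l + 1)

lemma fibPowerProd_succ (n : ℕ) :
    fibPowerProd (n + 1) = fibPowerProd n ^ 2 * fib (n + 2) ^ 2 := by
  rcases Nat.eq_zero_or_pos n with rfl | hn
  · rfl
  rw [fibPowerProd, prod_Icc_succ_top (by omega), Nat.sub_self, fibPowerProd, ← prod_pow]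
  congr 1
  refine prod_congr rfl fun l hl => ?_
  rw [Nat.sub_add_comm (mem_Icc.mp hl).2, pow_succ, pow_mul]

lemma iterate_fibTreeMap_one (n : ℕ) :
    fibTreeMap^[n] (fun _ => 1) =
      (fibPowerProd n * fib (n + 2)) • ![fib (n + 2), fib (n + 1)] := by
  induction n with
  | zero =>
    ext i
    fin_cases i <;> rfl
  | succ n ih =>
    rw [Function.iterate_succ_apply', ih, fibTreeMap_smul, fibPowerProd_succ,
      add_comm (fib (n + 2)), ← fib_add_two]
    congr 1
    ring

theorem stmt_13 :
    let A : Matrix (Fin 2) (Fin 2) ℕ := !![1, 1; 1, 1]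
    let D : Matrix (Fin 2) (Fin 2) ℕ := !![1, 1; 1, 0]
    let f : (Fin 2 → ℕ) → (Fin 2 → ℕ) := fun x i => A.mulVec x i * D.mulVec x i
    ∀ n : ℕ, 3 ≤ n →
      (f^[n] (fun _ => 1)) 0 + (f^[n] (fun _ => 1)) 1 =
        (∏ l ∈ Finset.Icc 2 n, Nat.fib (l + 1) ^ (2 ^ (n - l + 1))) *
          Nat.fib (n + 2) * Nat.fib (n + 3) := by
  intro A D f n _
  change fibTreeMap^[n] _ 0 + fibTreeMap^[n] _ 1 = fibPowerProd n * _ * _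
  rw [iterate_fibTreeMap_one, fib_add_two (n := n + 1)]
  simp only [Pi.smul_apply, smul_eq_mul, Matrix.cons_val_zero, Matrix.cons_val_one]
  ring
end

section
/- The series ∑_{n=2}^∞ (1/2^n) · log Fib(n+1) converges, and its value h satisfies 0.476 ≤ h ≤ 0.585. In particular, ∑_{n=2}^{5} (1/2^n) log Fib(n+1) ≤ h ≤ ∑_{n=2}^{5} (1/2^n) log Fib(n+1) + (log 2)/4 · ∑_{n=4}^∞ n/2^n, using Fib(n+1) ≤ 2^{n−2} for n ≥ 6. -/
/-!
Fibonacci numbers at most double from one index to the next, and `Fib 6 = 8`, so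
`Fib (n + 1) ≤ 2 ^ (n - 2)` for `n ≥ 5`. Hence the terms with `n ≥ 6` are bounded by
`(log 2 / 4) · m / 2 ^ m` with `m = n - 2 ≥ 4`, whose sum is `(log 2 / 4) · 5 / 8`; this gives
convergence and the two-sided bound around the partial sum
`L = (11/32) log 2 + (1/8) log 3 + (1/16) log 5 ≈ 0.47619`. The decimal bounds follow from
rational bounds on `log 3 / log 2` and `log 5 / log 2` obtained by comparing powers, such as
`2 ^ 84 ≤ 3 ^ 53`.
-/

open Real Finset

theorem Nat.fib_succ_le_two_mul {n : ℕ} (hn : 0 < n) : Nat.fib (n + 1) ≤ 2 * Nat.fib n := by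
  obtain ⟨m, rfl⟩ := Nat.exists_eq_add_of_lt hn
  rw [Nat.zero_add, Nat.fib_add_two, two_mul]
  exact Nat.add_le_add_right (Nat.fib_mono m.le_succ) _

theorem Nat.fib_add_le_two_pow_mul {m : ℕ} (hm : 0 < m) (k : ℕ) :
    Nat.fib (m + k) ≤ 2 ^ k * Nat.fib m := by
  induction k with
  | zero => simp
  | succ k ih =>
    calc Nat.fib (m + k + 1) ≤ 2 * Nat.fib (m + k) := Nat.fib_succ_le_two_mul (by omega)
      _ ≤ 2 * (2 ^ k * Nat.fib m) := Nat.mul_le_mul_left 2 ih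
      _ = 2 ^ (k + 1) * Nat.fib m := by ring

theorem natCast_mul_log_le_of_pow_le_pow {x y : ℝ} (hx : 0 < x) {m n : ℕ} (h : x ^ m ≤ y ^ n) :
    m * log x ≤ n * log y := by
  rw [← log_pow, ← log_pow]
  exact log_le_log (by positivity) h

theorem hasSum_add_div_two_pow (k : ℕ) :
    HasSum (fun n : ℕ => ((n : ℝ) + k) / 2 ^ (n + k)) (2 * (k + 1) / 2 ^ k) := by
  have hr : ‖(1 / 2 : ℝ)‖ < 1 := by norm_num
  have hf : (fun n : ℕ => ((n : ℝ) + k) / 2 ^ (n + k)) =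
      fun n : ℕ => (1 / 2 : ℝ) ^ k * (n * (1 / 2) ^ n + k * (1 / 2) ^ n) := by
    ext n; rw [pow_add, one_div_pow, one_div_pow]; field_simp
  have ha : (2 * (k + 1) / 2 ^ k : ℝ) = (1 / 2) ^ k * ((1 / 2) / (1 - 1 / 2) ^ 2 + k * 2) := by
    rw [one_div_pow]; field_simp; ring
  rw [hf, ha]
  exact ((hasSum_coe_mul_geometric_of_norm_lt_one hr).add
    (hasSum_geometric_two.mul_left (k : ℝ))).mul_left _

noncomputable def fibLogTerm (n : ℕ) : ℝ := 1 / 2 ^ (n + 2) * log (Nat.fib (n + 3))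

lemma fibLogTerm_nonneg (n : ℕ) : 0 ≤ fibLogTerm n :=
  mul_nonneg (by positivity) (log_natCast_nonneg _)

lemma fibLogTerm_add_four_le (n : ℕ) :
    fibLogTerm (n + 4) ≤ log 2 / 4 * (((n : ℝ) + 4) / 2 ^ (n + 4)) := by
  have hfib : Nat.fib (n + 7) ≤ 2 ^ (n + 4) :=
    calc Nat.fib (n + 7) = Nat.fib (6 + (n + 1)) := by ring_nf
      _ ≤ 2 ^ (n + 1) * Nat.fib 6 := Nat.fib_add_le_two_pow_mul (by norm_num) _
      _ = 2 ^ (n + 4) := by rw [show Nat.fib 6 = 2 ^ 3 by norm_num, ← pow_add]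
  have hlog : log (Nat.fib (n + 7)) ≤ (n + 4) * log 2 := by
    rw [show ((n : ℝ) + 4) = (n + 4 : ℕ) by push_cast; rfl, ← log_pow]
    exact log_le_log (Nat.cast_pos.2 (Nat.fib_pos.2 (by omega))) (by exact_mod_cast hfib)
  calc fibLogTerm (n + 4) = 1 / 2 ^ (n + 6) * log (Nat.fib (n + 7)) := rfl
    _ ≤ 1 / 2 ^ (n + 6) * ((n + 4) * log 2) := by gcongr
    _ = log 2 / 4 * (((n : ℝ) + 4) / 2 ^ (n + 4)) := by rw [pow_add]; ring

lemma summable_fibLogTerm : Summable fibLogTerm :=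
  (summable_nat_add_iff 4).1 <| ((hasSum_add_div_two_pow 4).summable.mul_left _).of_nonneg_of_le
    (fun n => fibLogTerm_nonneg _) (by simpa using fibLogTerm_add_four_le)

lemma tsum_fibLogTerm_add_four_le :
    ∑' n, fibLogTerm (n + 4) ≤ log 2 / 4 * ∑' n : ℕ, ((n : ℝ) + 4) / 2 ^ (n + 4) := by
  rw [← tsum_mul_left]
  refine Summable.tsum_le_tsum fibLogTerm_add_four_le ?_ ?_
  · exact (summable_nat_add_iff 4).2 summable_fibLogTerm
  · simpa using (hasSum_add_div_two_pow 4).summable.mul_left (log 2 / 4)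

lemma sum_range_four_fibLogTerm :
    ∑ i ∈ range 4, fibLogTerm i = 11 / 32 * log 2 + 1 / 8 * log 3 + 1 / 16 * log 5 := by
  have h8 : log 8 = 3 * log 2 := by
    rw [show (8 : ℝ) = 2 ^ 3 by norm_num, log_pow]; norm_num
  norm_num [sum_range_succ, fibLogTerm]
  rw [h8]; ring

lemma sum_range_four_fibLogTerm_bounds :
    0.476 ≤ ∑ i ∈ range 4, fibLogTerm i ∧
      ∑ i ∈ range 4, fibLogTerm i + log 2 / 4 * (5 / 8) ≤ 0.585 := by
  have h3lo := natCast_mul_log_le_of_pow_le_pow (x := 2) (y := 3) (m := 84) (n := 53)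
    (by norm_num) (by norm_num)
  have h3hi := natCast_mul_log_le_of_pow_le_pow (x := 3) (y := 2) (m := 41) (n := 65)
    (by norm_num) (by norm_num)
  have h5lo := natCast_mul_log_le_of_pow_le_pow (x := 2) (y := 5) (m := 65) (n := 28)
    (by norm_num) (by norm_num)
  have h5hi := natCast_mul_log_le_of_pow_le_pow (x := 5) (y := 2) (m := 40) (n := 93)
    (by norm_num) (by norm_num)
  push_cast at h3lo h3hi h5lo h5hi
  have hlog2_lo := log_two_gt_d9
  have hlog2_hi := log_two_lt_d9
  rw [sum_range_four_fibLogTerm]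
  constructor <;> norm_num <;> linarith

theorem stmt_14 :
    let g : ℕ → ℝ := fun n => (1 / 2 ^ (n + 2)) * Real.log (Nat.fib (n + 3))
    -- g m is the term of index n = m + 2 of ∑_{n=2}^∞ (1/2^n) log Fib(n+1)
    let h : ℝ := ∑' n : ℕ, g n
    let L : ℝ := ∑ n ∈ Finset.Icc 2 5, (1 / 2 ^ n) * Real.log (Nat.fib (n + 1))
    Summable g ∧
    (0.476 ≤ h ∧ h ≤ 0.585) ∧
    (L ≤ h ∧
      h ≤ L + (Real.log 2 / 4) * ∑' n : ℕ, ((n : ℝ) + 4) / 2 ^ (n + 4)) := by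
  intro g h L
  have hL : L = ∑ i ∈ range 4, fibLogTerm i := by
    simp only [L]
    rw [← Ico_add_one_right_eq_Icc, sum_Ico_eq_sum_range]
    exact sum_congr rfl fun i _ => by rw [add_comm 2 i]; rfl
  have hsplit : L + ∑' n, fibLogTerm (n + 4) = h :=
    hL ▸ summable_fibLogTerm.sum_add_tsum_nat_add 4
  have htail_nonneg : 0 ≤ ∑' n, fibLogTerm (n + 4) :=
    tsum_nonneg fun n => fibLogTerm_nonneg (n + 4)
  have hgeom : ∑' n : ℕ, ((n : ℝ) + 4) / 2 ^ (n + 4) = 5 / 8 := by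
    convert (hasSum_add_div_two_pow 4).tsum_eq using 1 <;> norm_num
  have htail_le := tsum_fibLogTerm_add_four_le
  obtain ⟨hlo, hhi⟩ := sum_range_four_fibLogTerm_bounds
  rw [hgeom] at htail_le ⊢
  refine ⟨summable_fibLogTerm, ⟨?_, ?_⟩, ?_, ?_⟩ <;> linarith
end

section
/- For the binary tree-shift X₅ = (A,E) with A = [[1,1],[1,1]] and E = [[1,0],[1,1]], setting f(x) = (Ax)*(Ex), one has lim_{n→∞} (log ‖f^n(𝟙)‖₁)/2^{n+1} = ∑_{n=2}^∞ (log n)/2^n. -/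
open Filter Real Finset

noncomputable def u15 : ℕ → ℝ
  | 0 => 1
  | n + 1 => ((n : ℝ) + 2) * (u15 n) ^ 2

lemma u15_pos : ∀ n, 0 < u15 n := by
  intro n
  induction n with
  | zero => norm_num [u15]
  | succ n ih => simp only [u15]; positivity

lemma log_u15 : ∀ n, Real.log (u15 n) / 2 ^ (n + 1) =
    ∑ k ∈ Finset.range n, Real.log ((k : ℝ) + 2) / 2 ^ (k + 2) := by
  intro n
  induction n with
  | zero => simp [u15]
  | succ n ih =>
    rw [Finset.sum_range_succ, ← ih]
    have hu := u15_pos n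
    have h1 : Real.log (u15 (n + 1)) = Real.log ((n : ℝ) + 2) + 2 * Real.log (u15 n) := by
      simp only [u15]
      rw [Real.log_mul (by positivity) (by positivity), Real.log_pow]
      push_cast; ring
    rw [h1]
    field_simp
    ring

theorem stmt_15 :
    let A : Matrix (Fin 2) (Fin 2) ℝ := !![1, 1; 1, 1]
    let E : Matrix (Fin 2) (Fin 2) ℝ := !![1, 0; 1, 1]
    let f : (Fin 2 → ℝ) → (Fin 2 → ℝ) := fun x i => A.mulVec x i * E.mulVec x i
    Summable (fun n : ℕ => Real.log ((n : ℝ) + 2) / 2 ^ (n + 2)) ∧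
    Filter.Tendsto
      (fun n : ℕ =>
        Real.log ((f^[n] (fun _ => 1)) 0 + (f^[n] (fun _ => 1)) 1) /
          2 ^ (n + 1))
      Filter.atTop
      (nhds (∑' n : ℕ, Real.log ((n : ℝ) + 2) / 2 ^ (n + 2))) := by
  intro A E f
  have hsum : Summable (fun n : ℕ => Real.log ((n : ℝ) + 2) / 2 ^ (n + 2)) := by
    have hc : Summable (fun n : ℕ => ((n : ℝ) + 2) * (1 / 2) ^ n) := by
      have h1 : Summable (fun n : ℕ => (n : ℝ) * (1 / 2) ^ n) :=
        (summable_pow_mul_geometric_of_norm_lt_one 1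
          (show ‖(1/2 : ℝ)‖ < 1 by norm_num)).congr (fun n => by simp)
      have h2 : Summable (fun n : ℕ => (2 : ℝ) * (1 / 2) ^ n) :=
        (summable_geometric_of_lt_one (by norm_num) (by norm_num)).mul_left 2
      exact (h1.add h2).congr (fun n => by ring)
    have hnn : ∀ n : ℕ, 0 ≤ Real.log ((n : ℝ) + 2) / 2 ^ (n + 2) := fun n =>
      div_nonneg (Real.log_nonneg (by linarith [Nat.cast_nonneg (α := ℝ) n])) (by positivity)
    apply Summable.of_nonneg_of_le hnn _ hc
    intro n
    have hl : Real.log ((n : ℝ) + 2) ≤ (n : ℝ) + 2 := by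
      have := Real.log_le_sub_one_of_pos (show (0:ℝ) < (n:ℝ) + 2 by positivity)
      linarith
    calc Real.log ((n : ℝ) + 2) / 2 ^ (n + 2) ≤ ((n : ℝ) + 2) / 2 ^ (n + 2) :=
          by gcongr
      _ = ((n : ℝ) + 2) * (1 / 2) ^ (n + 2) := by
          rw [div_eq_mul_inv, one_div, inv_pow]
      _ ≤ ((n : ℝ) + 2) * (1 / 2) ^ n := by
          apply mul_le_mul_of_nonneg_left _ (by positivity)
          apply pow_le_pow_of_le_one (by norm_num) (by norm_num)
          omega
  refine ⟨hsum, ?_⟩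
  have hiter : ∀ n : ℕ, f^[n] (fun _ => 1) 0 = u15 n ∧
      f^[n] (fun _ => 1) 1 = ((n : ℝ) + 1) * u15 n := by
    intro n
    induction n with
    | zero => simp [u15]
    | succ n ih =>
      obtain ⟨h0, h1⟩ := ih
      rw [Function.iterate_succ_apply']
      constructor
      · show A.mulVec _ 0 * E.mulVec _ 0 = _
        simp [A, E, Matrix.mulVec, dotProduct, Fin.sum_univ_two, h0, h1, u15]
        ring
      · show A.mulVec _ 1 * E.mulVec _ 1 = _
        simp [A, E, Matrix.mulVec, dotProduct, Fin.sum_univ_two, h0, h1, u15]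
        ring
  have hfun : ∀ n : ℕ,
      Real.log ((f^[n] (fun _ => 1)) 0 + (f^[n] (fun _ => 1)) 1) / 2 ^ (n + 1) =
      (∑ k ∈ Finset.range n, Real.log ((k : ℝ) + 2) / 2 ^ (k + 2)) +
        Real.log ((n : ℝ) + 2) / 2 ^ (n + 1) := by
    intro n
    obtain ⟨h0, h1⟩ := hiter n
    rw [h0, h1, ← log_u15]
    have hu := u15_pos n
    have : u15 n + ((n : ℝ) + 1) * u15 n = ((n : ℝ) + 2) * u15 n := by ring
    rw [this, Real.log_mul (by positivity) (by positivity)]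
    ring
  have hto : Tendsto (fun n : ℕ => ∑ k ∈ Finset.range n,
      Real.log ((k : ℝ) + 2) / 2 ^ (k + 2)) atTop
      (nhds (∑' n : ℕ, Real.log ((n : ℝ) + 2) / 2 ^ (n + 2))) :=
    hsum.hasSum.tendsto_sum_nat
  have hz : Tendsto (fun n : ℕ => Real.log ((n : ℝ) + 2) / 2 ^ (n + 1)) atTop (nhds 0) := by
    have := hsum.tendsto_atTop_zero
    have h2 : Tendsto (fun n : ℕ => 2 * (Real.log ((n : ℝ) + 2) / 2 ^ (n + 2))) atTop
        (nhds (2 * 0)) := this.const_mul 2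
    simp only [mul_zero] at h2
    refine h2.congr (fun n => ?_)
    rw [pow_succ]
    field_simp
  have := hto.add hz
  rw [add_zero] at this
  exact Tendsto.congr (fun n => (hfun n).symm) this
end

section
/- Define c₁ = 2 and c_{j} = c_{j−1}(c_{j−1} + 1) for j > 1 (sequence 2, 6, 42, 1806, …). Then for the binary tree-shift (B,E) with B = [[1,0],[0,1]] and E = [[1,0],[1,1]] and f(x) = (Bx)*(Ex), one has f^n(𝟙) = (1, c_n) for all n ≥ 1, hence ‖f^n(𝟙)‖₁ = c_n + 1. -/
/-!
On vectors of the form `(1, a)` the tree-shift map acts as `(1, a) ↦ (1, a (a + 1))`, so its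
iterates starting from `𝟙 = (1, 1)` follow Sylvester's recursion `a ↦ a (a + 1)` in the second
coordinate, whose `n`-th iterate from `1` is `c n`.
-/

open Matrix

variable {R : Type*} [CommSemiring R]

def treeShift (x : Fin 2 → R) : Fin 2 → R :=
  fun i => (!![1, 0; 0, 1] *ᵥ x) i * (!![1, 0; 1, 1] *ᵥ x) i

theorem treeShift_one_vec (a : R) : treeShift ![1, a] = ![1, a * (a + 1)] := by
  ext i
  fin_cases i <;> simp [treeShift, mulVec, dotProduct, Fin.sum_univ_two, add_comm]

theorem iterate_treeShift_one_vec (n : ℕ) (a : R) :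
    treeShift^[n] ![1, a] = ![1, (fun b => b * (b + 1))^[n] a] :=
  (Function.Semiconj.iterate_right (f := fun b : R => ![1, b])
    (fun b => (treeShift_one_vec b).symm) n a).symm

theorem eq_iterate_of_sylvester_rec (c : ℕ → ℕ) (hc1 : c 1 = 2)
    (hc : ∀ j, 2 ≤ j → c j = c (j - 1) * (c (j - 1) + 1)) :
    ∀ n, 1 ≤ n → c n = (fun b => b * (b + 1))^[n] 1 := by
  intro n hn
  induction n, hn using Nat.le_induction with
  | base => exact hc1
  | succ n hn ih =>
    rw [hc (n + 1) (by omega), Nat.add_sub_cancel, ih, Function.iterate_succ_apply']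

theorem stmt_16 (c : ℕ → ℕ) (hc1 : c 1 = 2)
    (hc : ∀ j, 2 ≤ j → c j = c (j - 1) * (c (j - 1) + 1)) :
    let B : Matrix (Fin 2) (Fin 2) ℕ := !![1, 0; 0, 1]
    let E : Matrix (Fin 2) (Fin 2) ℕ := !![1, 0; 1, 1]
    let f : (Fin 2 → ℕ) → (Fin 2 → ℕ) := fun x i => B.mulVec x i * E.mulVec x i
    ∀ n : ℕ, 1 ≤ n →
      f^[n] (fun _ => 1) = ![1, c n] ∧
      (f^[n] (fun _ => 1)) 0 + (f^[n] (fun _ => 1)) 1 = c n + 1 := by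
  intro B E f n hn
  have hf : f^[n] (fun _ => 1) = ![1, c n] := by
    have hone : (fun _ => 1 : Fin 2 → ℕ) = ![1, 1] := by ext i; fin_cases i <;> rfl
    rw [hone, eq_iterate_of_sylvester_rec c hc1 hc n hn]
    exact iterate_treeShift_one_vec n 1
  refine ⟨hf, ?_⟩
  simp [hf, add_comm]
end

section
/- Define e₀ = 1, e₁ = 2, and e_j = e_{j−2}² (e_{j−2}² + e_{j−1}) for j ≥ 2. Then e_n + e_{n−1}² > 2^{2^{n−1}} for all n ≥ 1. Consequently, lim inf_{n→∞} (log(e_n + e_{n−1}²))/2^{n+1} ≥ (1/4) log 2. -/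
/-!
Write `s n = e n + e (n - 1) ^ 2`, `x = e (n + 1)` and `y = e n ^ 2`. The recursion gives
`s (n + 2) = x ^ 2 + x * y + y ^ 2 = s (n + 1) ^ 2 - x * y`, and `0 ≤ 4 * x * y ≤ s (n + 1) ^ 2`, so
`3 / 4 * s (n + 1) ^ 2 ≤ s (n + 2) ≤ s (n + 1) ^ 2`. Starting from `s 1 = 3`, the upper bound gives
`s (n + 1) ≤ 2 ^ 2 ^ (n + 1)`, and the lower bound propagates `4 / 3 * 2 ^ 2 ^ n ≤ s (n + 1)`, because the
constant `4 / 3` is a fixed point of `c ↦ 3 / 4 * c ^ 2`. Taking logarithms, `log (s n) / 2 ^ (n + 1)`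
lies between `log 2 / 4` and `log 2 / 2` for `n ≥ 1`; the upper bound is what makes the real `liminf`
meaningful.
-/

open Filter

lemma two_pow_mul_log_two_le_log {k : ℕ} {x : ℝ} (h : 2 ^ 2 ^ k ≤ x) :
    2 ^ k * Real.log 2 ≤ Real.log x := by
  simpa [Real.log_pow] using Real.log_le_log (by positivity) h

lemma log_le_two_pow_mul_log_two {k : ℕ} {x : ℝ} (hx : 0 < x) (h : x ≤ 2 ^ 2 ^ k) :
    Real.log x ≤ 2 ^ k * Real.log 2 := by
  simpa [Real.log_pow] using Real.log_le_log hx h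

lemma log_two_div_four_le_liminf_log_div_two_pow {s : ℕ → ℝ}
    (hlow : ∀ n, 2 ^ 2 ^ n ≤ s (n + 1)) (hup : ∀ n, s (n + 1) ≤ 2 ^ 2 ^ (n + 1)) :
    Real.log 2 / 4 ≤ liminf (fun n => Real.log (s n) / 2 ^ (n + 1)) atTop := by
  have hshift : ∀ n : ℕ, (2 : ℝ) ^ (n + 1 + 1) = 4 * 2 ^ n := fun n => by ring
  have hbelow : ∀ᶠ n in atTop, Real.log 2 / 4 ≤ Real.log (s n) / 2 ^ (n + 1) := by
    refine eventually_atTop.2 ⟨1, fun n hn => ?_⟩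
    obtain ⟨m, rfl⟩ := Nat.exists_eq_add_of_le' hn
    rw [le_div_iff₀ (by positivity), hshift]
    linarith [two_pow_mul_log_two_le_log (hlow m)]
  have habove : ∀ᶠ n in atTop, Real.log (s n) / 2 ^ (n + 1) ≤ Real.log 2 / 2 := by
    refine eventually_atTop.2 ⟨1, fun n hn => ?_⟩
    obtain ⟨m, rfl⟩ := Nat.exists_eq_add_of_le' hn
    have hs : 0 < s (m + 1) := lt_of_lt_of_le (by positivity) (hlow m)
    have hlog := log_le_two_pow_mul_log_two hs (hup m)
    rw [div_le_iff₀ (by positivity), hshift]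
    rw [pow_succ] at hlog
    linarith
  exact le_liminf_of_le (isBoundedUnder_of_eventually_le habove).isCoboundedUnder_ge hbelow

section Recursion

variable {e : ℕ → ℕ}

lemma add_sq_succ_succ_add_mul_eq
    (he : ∀ j, 2 ≤ j → e j = e (j - 2) ^ 2 * (e (j - 2) ^ 2 + e (j - 1))) (n : ℕ) :
    e (n + 2) + e (n + 1) ^ 2 + e (n + 1) * e n ^ 2 = (e (n + 1) + e n ^ 2) ^ 2 := by
  rw [he (n + 2) (by omega), Nat.add_sub_cancel, show n + 2 - 1 = n + 1 by omega]
  ring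

lemma add_sq_succ_succ_le_sq
    (he : ∀ j, 2 ≤ j → e j = e (j - 2) ^ 2 * (e (j - 2) ^ 2 + e (j - 1))) (n : ℕ) :
    e (n + 2) + e (n + 1) ^ 2 ≤ (e (n + 1) + e n ^ 2) ^ 2 := by
  rw [← add_sq_succ_succ_add_mul_eq he n]
  exact Nat.le_add_right _ _

lemma three_mul_sq_le_four_mul_add_sq_succ_succ
    (he : ∀ j, 2 ≤ j → e j = e (j - 2) ^ 2 * (e (j - 2) ^ 2 + e (j - 1))) (n : ℕ) :
    3 * (e (n + 1) + e n ^ 2) ^ 2 ≤ 4 * (e (n + 2) + e (n + 1) ^ 2) := by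
  have hamgm := four_mul_le_sq_add (e (n + 1)) (e n ^ 2)
  have hid := add_sq_succ_succ_add_mul_eq he n
  nlinarith

lemma add_sq_succ_le_two_pow_two_pow (he0 : e 0 = 1) (he1 : e 1 = 2)
    (he : ∀ j, 2 ≤ j → e j = e (j - 2) ^ 2 * (e (j - 2) ^ 2 + e (j - 1))) (n : ℕ) :
    e (n + 1) + e n ^ 2 ≤ 2 ^ 2 ^ (n + 1) := by
  induction n with
  | zero => simp [he0, he1]
  | succ n ih =>
    calc e (n + 2) + e (n + 1) ^ 2
        ≤ (e (n + 1) + e n ^ 2) ^ 2 := add_sq_succ_succ_le_sq he n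
      _ ≤ (2 ^ 2 ^ (n + 1)) ^ 2 := Nat.pow_le_pow_left ih 2
      _ = 2 ^ 2 ^ (n + 2) := by ring

lemma four_mul_two_pow_two_pow_le (he0 : e 0 = 1) (he1 : e 1 = 2)
    (he : ∀ j, 2 ≤ j → e j = e (j - 2) ^ 2 * (e (j - 2) ^ 2 + e (j - 1))) (n : ℕ) :
    4 * 2 ^ 2 ^ n ≤ 3 * (e (n + 1) + e n ^ 2) := by
  induction n with
  | zero => simp [he0, he1]
  | succ n ih =>
    have hstep := three_mul_sq_le_four_mul_add_sq_succ_succ he n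
    have hsq : (4 * 2 ^ 2 ^ n) ^ 2 ≤ (3 * (e (n + 1) + e n ^ 2)) ^ 2 := Nat.pow_le_pow_left ih 2
    have hpow : (2 : ℕ) ^ 2 ^ (n + 1) = (2 ^ 2 ^ n) ^ 2 := by ring
    rw [hpow]
    nlinarith

end Recursion

theorem stmt_18 (e : ℕ → ℕ) (he0 : e 0 = 1) (he1 : e 1 = 2)
    (he : ∀ j, 2 ≤ j → e j = e (j - 2) ^ 2 * (e (j - 2) ^ 2 + e (j - 1))) :
    (∀ n : ℕ, 1 ≤ n → 2 ^ 2 ^ (n - 1) < e n + e (n - 1) ^ 2) ∧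
    (1 / 4) * Real.log 2 ≤
      Filter.liminf
        (fun n : ℕ => Real.log ((e n : ℝ) + (e (n - 1) : ℝ) ^ 2) / 2 ^ (n + 1))
        Filter.atTop := by
  have hlow (n : ℕ) : 2 ^ 2 ^ n < e (n + 1) + e n ^ 2 := by
    have := four_mul_two_pow_two_pow_le he0 he1 he n
    have : 0 < 2 ^ 2 ^ n := by positivity
    omega
  refine ⟨fun n hn => ?_, ?_⟩
  · obtain ⟨m, rfl⟩ := Nat.exists_eq_add_of_le' hn
    simpa using hlow m
  · rw [one_div_mul_eq_div]
    refine log_two_div_four_le_liminf_log_div_two_pow (fun n => ?_) (fun n => ?_)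
    · simpa using (Nat.cast_le (α := ℝ)).2 (hlow n).le
    · simpa using (Nat.cast_le (α := ℝ)).2 (add_sq_succ_le_two_pow_two_pow he0 he1 he n)
end

section
/- Define s₁ = 4 and s_n = (s_{n−1} + 1)² for n > 1 (sequence 4, 25, 676, 458329, …). Then for the binary tree-shift (G,G) with G = [[1,1],[0,1]] and f(x) = (Gx)*(Gx), one has f^n(𝟙) = (s_n, 1) for all n ≥ 1, hence the complexity function is p(n) = s_n + 1. -/
/-! The vectors `![a, 1]` are mapped by `f` to vectors of the same shape, via `a ↦ (a + 1) ^ 2`;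
since `𝟙 = ![1, 1]`, iterating gives `fⁿ(𝟙) = ![gⁿ(1), 1]` with `g a = (a + 1) ^ 2`,
and `gⁿ(1)` satisfies the recursion defining `sₙ`. -/

lemma unipotent_mulVec_mul_self_vecCons_one {R : Type*} [CommSemiring R] (a : R) :
    (fun i => (!![1, 1; 0, 1] : Matrix (Fin 2) (Fin 2) R).mulVec ![a, 1] i *
        (!![1, 1; 0, 1] : Matrix (Fin 2) (Fin 2) R).mulVec ![a, 1] i) =
      ![(a + 1) ^ 2, 1] := by
  ext i
  fin_cases i <;> simp [Matrix.mulVec, dotProduct, sq]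

lemma iterate_vecCons_one {R : Type*} {f : (Fin 2 → R) → (Fin 2 → R)} {g : R → R} [One R]
    (hf : ∀ a, f ![a, 1] = ![g a, 1]) (n : ℕ) (a : R) :
    f^[n] ![a, 1] = ![g^[n] a, 1] :=
  (Function.Semiconj.iterate_right (f := fun a => ![a, 1]) (fun a => (hf a).symm) n a).symm

lemma eq_iterate_of_recursion (s : ℕ → ℕ) (hs1 : s 1 = 4)
    (hs : ∀ n, 2 ≤ n → s n = (s (n - 1) + 1) ^ 2) (n : ℕ) (hn : 1 ≤ n) :
    s n = (fun a => (a + 1) ^ 2)^[n] 1 := by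
  induction n, hn using Nat.le_induction with
  | base => simp [hs1]
  | succ m hm ih =>
    rw [hs (m + 1) (by omega), Nat.add_sub_cancel, ih, Function.iterate_succ_apply']

theorem stmt_19 (s : ℕ → ℕ) (hs1 : s 1 = 4)
    (hs : ∀ n, 2 ≤ n → s n = (s (n - 1) + 1) ^ 2) :
    let G : Matrix (Fin 2) (Fin 2) ℕ := !![1, 1; 0, 1]
    let f : (Fin 2 → ℕ) → (Fin 2 → ℕ) := fun x i => G.mulVec x i * G.mulVec x i
    ∀ n : ℕ, 1 ≤ n →
      f^[n] (fun _ => 1) = ![s n, 1] ∧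
      (f^[n] (fun _ => 1)) 0 + (f^[n] (fun _ => 1)) 1 = s n + 1 := by
  intro G f n hn
  have hone : (fun _ : Fin 2 => (1 : ℕ)) = ![1, 1] := by
    ext i; fin_cases i <;> rfl
  have hiter : f^[n] (fun _ => 1) = ![s n, 1] := by
    rw [hone, iterate_vecCons_one unipotent_mulVec_mul_self_vecCons_one,
      eq_iterate_of_recursion s hs1 hs n hn]
  exact ⟨hiter, by simp [hiter]⟩
end
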